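/- Let C be an n×n symmetric real matrix with n ≥ 4. Then the tour ⟨1, 2, …, n⟩ is a master tour for C — that is, for every nonempty subset I ⊆ {1,…,n}, the tour visiting the elements of I in increasing order of their indices has length less than or equal to the length of every tour on I — if and only if C is a Kalmanson matrix. -/

import Mathlib

/-- Length of a walk along a list of nodes (sum of consecutive edge costs). -/
def pathLen {α : Type*} (C : α → α → ℝ) : List α → ℝ
  | [] => 0
  | [_] => 0
  | a :: b :: t => C a b + pathLen C (b :: t)

/-- Length of the closed tour visiting the nodes of `l` in order and
returning from the last node to the first one. -/
def tourLen {α : Type*} (C : α → α → ℝ) (l : List α) : ℝ :=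
  pathLen C (l ++ l.take 1)

/-- `l` is a tour on the finite set `I`: an enumeration of the elements of `I`,
each appearing exactly once. -/
def IsTourOn {α : Type*} [DecidableEq α] (I : Finset α) (l : List α) : Prop :=
  l.Nodup ∧ l.toFinset = I

/-- Kalmanson conditions for a symmetric matrix indexed by `Fin n`. -/
def IsKalmanson {n : ℕ} (C : Fin n → Fin n → ℝ) : Prop :=
  ∀ i j k l : Fin n, i < j → j < k → k < l →
    C i j + C k l ≤ C i k + C j l ∧ C i l + C j k ≤ C i k + C j l

/-! Let `m` be the smallest element of `I`. Rotating a tour on `I` to start at `m` shows that its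
length is the length of a tour `a … b` on `I \ {m}` plus the cost `C m a + C b m - C b a` of
inserting `m` between `b` and `a`. The Kalmanson inequalities make this cost smallest when `a` and
`b` are the extreme elements of `I \ {m}`, which are the ends of the sorted tour, so induction on
`I` gives the master tour property. Conversely, comparing the sorted tour on `{i, j, k, l}` with
`⟨i, k, j, l⟩` and `⟨i, j, l, k⟩` gives the two Kalmanson inequalities. -/

section Length

variable {α : Type*} (C : α → α → ℝ)

lemma pathLen_concat {l : List α} (hl : l ≠ []) (y : α) :
    pathLen C (l ++ [y]) = pathLen C l + C (l.getLast hl) y := by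
  induction l with
  | nil => exact absurd rfl hl
  | cons a t ih =>
    rcases t with _ | ⟨b, t⟩
    · simp [pathLen]
    · simp only [List.cons_append, pathLen] at ih ⊢
      rw [ih (List.cons_ne_nil b t), List.getLast_cons (List.cons_ne_nil b t)]
      ring

lemma tourLen_eq_pathLen_add {l : List α} (hl : l ≠ []) :
    tourLen C l = pathLen C l + C (l.getLast hl) (l.head hl) := by
  obtain ⟨a, t, rfl⟩ := List.exists_cons_of_ne_nil hl
  exact pathLen_concat C hl a

lemma tourLen_cons (a : α) {l : List α} (hl : l ≠ []) :
    tourLen C (a :: l) = tourLen C l +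
      (C a (l.head hl) + C (l.getLast hl) a - C (l.getLast hl) (l.head hl)) := by
  obtain ⟨b, t, rfl⟩ := List.exists_cons_of_ne_nil hl
  rw [tourLen_eq_pathLen_add C hl, tourLen_eq_pathLen_add C (List.cons_ne_nil a _),
    List.getLast_cons hl]
  simp only [pathLen, List.head_cons]
  ring

lemma tourLen_cons_eq_concat (a : α) (l : List α) :
    tourLen C (a :: l) = tourLen C (l ++ [a]) := by
  rcases l with _ | ⟨b, t⟩
  · rfl
  · rw [tourLen_cons C a (List.cons_ne_nil b t),
      tourLen_eq_pathLen_add C (List.cons_ne_nil b t),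
      tourLen_eq_pathLen_add C (List.append_ne_nil_of_left_ne_nil (List.cons_ne_nil b t) _),
      pathLen_concat C (List.cons_ne_nil b t), List.getLast_append_singleton]
    simp only [List.cons_append, List.head_cons]
    ring

lemma tourLen_rotate (l : List α) (k : ℕ) : tourLen C (l.rotate k) = tourLen C l := by
  induction k generalizing l with
  | zero => simp
  | succ k ih =>
    rcases l with _ | ⟨a, t⟩
    · simp
    · rw [List.rotate_cons_succ, ih, tourLen_cons_eq_concat]

lemma List.IsRotated.tourLen_eq {l l' : List α} (h : l ~r l') : tourLen C l = tourLen C l' := by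
  obtain ⟨k, rfl⟩ := h
  exact (tourLen_rotate C l k).symm

end Length

section Tours

variable {α : Type*} [DecidableEq α]

lemma isTourOn_empty_iff {l : List α} : IsTourOn ∅ l ↔ l = [] := by
  constructor
  · exact fun h => (List.toFinset_eq_empty_iff l).mp h.2
  · rintro rfl
    exact ⟨List.nodup_nil, rfl⟩

lemma IsTourOn.exists_isRotated_cons {s : Finset α} {a : α} {l : List α}
    (hl : IsTourOn (insert a s) l) (ha : a ∉ s) : ∃ w, IsTourOn s w ∧ l ~r a :: w := by
  have hal : a ∈ l := by simp [← List.mem_toFinset, hl.2]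
  obtain ⟨u, v, rfl⟩ := List.append_of_mem hal
  have hrot : u ++ a :: v ~r a :: (v ++ u) := by
    simpa using List.isRotated_append (l := u) (l' := a :: v)
  have hnd := hrot.nodup_iff.mp hl.1
  refine ⟨v ++ u, ⟨hnd.of_cons, ?_⟩, hrot⟩
  have hins : insert a (v ++ u).toFinset = insert a s := by
    rw [← hl.2, List.toFinset_eq_of_perm _ _ hrot.perm, List.toFinset_cons]
  rw [← Finset.erase_insert (s := (v ++ u).toFinset) (by simpa using hnd.notMem), hins,
    Finset.erase_insert ha]

lemma isTourOn_toFinset_of_perm {l l' : List α} (hl : l.Nodup) (h : l.Perm l') :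
    IsTourOn l.toFinset l' :=
  ⟨h.nodup_iff.mp hl, (List.toFinset_eq_of_perm _ _ h).symm⟩

end Tours

namespace IsKalmanson

variable {n : ℕ} {C : Fin n → Fin n → ℝ}

lemma insertion_le_of_lt (hk : IsKalmanson C) {m p q x y : Fin n} (hmp : m < p) (hpx : p ≤ x)
    (hxy : x < y) (hyq : y ≤ q) :
    C m p + C m q - C p q ≤ C m x + C m y - C x y := by
  -- move the pair `(x, y)` to `(p, y)`, then to `(p, q)`
  have hx_to_p : C m p + C x y ≤ C m x + C p y := by
    rcases hpx.eq_or_lt with rfl | hpx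
    · exact le_rfl
    · exact (hk m p x y hmp hpx hxy).1
  have hy_to_q : C m q + C p y ≤ C m y + C p q := by
    rcases hyq.eq_or_lt with rfl | hyq
    · exact le_rfl
    · exact (hk m p y q hmp (hpx.trans_lt hxy) hyq).2
  linarith

lemma insertion_le (hk : IsKalmanson C) (hsym : ∀ i j, C i j = C j i) {m p q x y : Fin n}
    (hmp : m < p) (hpx : p ≤ x) (hxq : x ≤ q) (hpy : p ≤ y) (hyq : y ≤ q) (hxy : x ≠ y) :
    C m p + C q m - C q p ≤ C m x + C y m - C y x := by
  rcases hxy.lt_or_gt with hlt | hlt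
  · linarith [hk.insertion_le_of_lt hmp hpx hlt hyq, hsym q m, hsym q p, hsym y m, hsym y x]
  · linarith [hk.insertion_le_of_lt hmp hpy hlt hxq, hsym q m, hsym q p, hsym x m, hsym y m,
    hsym y x]

lemma tourLen_cons_sort_sub_le (hk : IsKalmanson C) (hsym : ∀ i j, C i j = C j i)
    {s : Finset (Fin n)} {m : Fin n} (hm : ∀ x ∈ s, m < x) {w : List (Fin n)}
    (hw : IsTourOn s w) :
    tourLen C (m :: s.sort (· ≤ ·)) - tourLen C (s.sort (· ≤ ·)) ≤
      tourLen C (m :: w) - tourLen C w := by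
  obtain ⟨hnd, rfl⟩ := hw
  rcases w with _ | ⟨a, v⟩
  · simp
  rcases eq_or_ne v [] with rfl | hv
  · simp
  set L := (a :: v).toFinset.sort (· ≤ ·)
  have hmemL : ∀ x ∈ a :: v, x ∈ L := by simp [L]
  have hL : L ≠ [] := List.ne_nil_of_mem (hmemL a List.mem_cons_self)
  have hsorted : L.Pairwise (· ≤ ·) := Finset.pairwise_sort _ _
  have hhead : ∀ x ∈ a :: v, L.head hL ≤ x := fun x hx => hsorted.rel_head (hmemL x hx)
  have hlast : ∀ x ∈ a :: v, x ≤ L.getLast hL := fun x hx => hsorted.rel_getLast (hmemL x hx)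
  have hmp : m < L.head hL := hm _ ((Finset.mem_sort _).mp (List.head_mem hL))
  have hb : v.getLast hv ∈ a :: v := List.mem_cons_of_mem a (List.getLast_mem hv)
  have hab : a ≠ v.getLast hv := fun h => (List.nodup_cons.mp hnd).1 (h ▸ List.getLast_mem hv)
  rw [tourLen_cons C m hL, tourLen_cons C m (List.cons_ne_nil a v), List.head_cons,
    List.getLast_cons hv]
  have := hk.insertion_le hsym hmp (hhead a List.mem_cons_self) (hlast a List.mem_cons_self)
    (hhead _ hb) (hlast _ hb) hab
  linarith

theorem tourLen_sort_le (hk : IsKalmanson C) (hsym : ∀ i j, C i j = C j i)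
    {s : Finset (Fin n)} {l : List (Fin n)} (hl : IsTourOn s l) :
    tourLen C (s.sort (· ≤ ·)) ≤ tourLen C l := by
  induction s using Finset.induction_on_min generalizing l with
  | empty => simp [isTourOn_empty_iff.mp hl]
  | insert a s ha ih =>
    have has : a ∉ s := fun h => (ha a h).false
    obtain ⟨w, hw, hrot⟩ := hl.exists_isRotated_cons has
    rw [Finset.sort_insert _ (fun x hx => (ha x hx).le) has, hrot.tourLen_eq]
    linarith [ih hw, hk.tourLen_cons_sort_sub_le hsym ha hw]

end IsKalmanson

lemma isKalmanson_of_tourLen_sort_le {n : ℕ} {C : Fin n → Fin n → ℝ}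
    (hsym : ∀ i j, C i j = C j i)
    (hmaster : ∀ I : Finset (Fin n), I.Nonempty → ∀ l : List (Fin n), IsTourOn I l →
      tourLen C (I.sort (· ≤ ·)) ≤ tourLen C l) :
    IsKalmanson C := by
  intro i j k l hij hjk hkl
  have hlt : [i, j, k, l].Pairwise (· < ·) := by
    simp [hij, hjk, hkl, hij.trans hjk, hjk.trans hkl, (hij.trans hjk).trans hkl]
  have hnd : [i, j, k, l].Nodup := hlt.imp ne_of_lt
  have hsort : [i, j, k, l].toFinset.sort (· ≤ ·) = [i, j, k, l] :=
    (List.toFinset_sort _ hnd).mpr (hlt.imp le_of_lt)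
  have hne : [i, j, k, l].toFinset.Nonempty := ⟨i, by simp⟩
  have hcross := hmaster _ hne _ (isTourOn_toFinset_of_perm hnd (.cons i (.swap k j [l])))
  have hswap := hmaster _ hne _ (isTourOn_toFinset_of_perm hnd (.cons i (.cons j (.swap l k []))))
  rw [hsort] at hcross hswap
  simp only [tourLen, pathLen, List.take, List.cons_append, List.nil_append] at hcross hswap
  constructor
  · linarith [hsym k j]
  · linarith [hsym l i, hsym k i, hsym l k]

theorem master_tour_iff_kalmanson_general
    {n : ℕ} (C : Fin n → Fin n → ℝ)
    (hsym : ∀ i j, C i j = C j i) :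
    (∀ I : Finset (Fin n), I.Nonempty →
        ∀ l : List (Fin n), IsTourOn I l →
          tourLen C (I.sort (· ≤ ·)) ≤ tourLen C l) ↔ IsKalmanson C :=
  ⟨isKalmanson_of_tourLen_sort_le hsym, fun hk _ _ _ hl => hk.tourLen_sort_le hsym hl⟩

theorem master_tour_iff_kalmanson
    {n : ℕ} (hn : 4 ≤ n) (C : Fin n → Fin n → ℝ)
    (hsym : ∀ i j, C i j = C j i) :
    (∀ I : Finset (Fin n), I.Nonempty →
        ∀ l : List (Fin n), IsTourOn I l →
          tourLen C (I.sort (· ≤ ·)) ≤ tourLen C l) ↔ IsKalmanson C :=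
  master_tour_iff_kalmanson_general C hsym
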